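/- Let U, L, W, Z be Hilbert spaces with Z continuously embedded in L; let G ∈ L(U,L) be a linear isomorphism, F ∈ L(U,W), f* ∈ L, w* ∈ W, ρ > 0. Define a(u,v) := ⟨Gu,Gv⟩_L, b(z,v) := −⟨z,Gv⟩_L, d(u,v) := ⟨Fu,Fv⟩_W, e(z,y) := ρ⟨z,y⟩_Z. Then a is bounded symmetric coercive, b is bounded, d is bounded symmetric positive semi-definite, and e is bounded symmetric coercive; hence the associated saddle-point problem has a unique solution (u,z,p) ∈ U×Z×U, and (u,z) is the unique minimizer of J(u,z) := ½‖Fu − w*‖²_W + (ρ/2)‖z‖²_Z subject to Gu = f* + z. -/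

import Mathlib

open RealInnerProductSpace

/-!
Since `G` is onto, the second saddle-point equation says exactly `G u = f* + i z`, and the first
splits (test with `y = 0`, resp. `v = 0`) into the adjoint equation `⟪G v, G p⟫ = ⟪F v, w* - F u⟫`
and the optimality condition `ρ ⟪z, y⟫ = ⟪i y, G p⟫`. Together they make the first variation of
`J` vanish along the constraint, so `J (u', z') = J (u, z) + ½‖F (u' - u)‖² + (ρ/2)‖z' - z‖²`
for every feasible `(u', z')`: `(u, z)` is the unique minimizer, and `p` is then fixed by the
adjoint equation, which gives uniqueness of the saddle point. For existence, eliminating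
`u = G⁻¹ (f* + i z)` leaves the Tikhonov normal equation `(ρ + B*B) z = B* (w* - F G⁻¹ f*)` with
`B = F G⁻¹ i`, solvable by Lax–Milgram, and `G p` is the Riesz representative of
`x ↦ ⟪F G⁻¹ x, w* - F u⟫`.
-/

theorem abs_inner_map_map_le {E₁ E₂ F : Type*}
    [NormedAddCommGroup E₁] [InnerProductSpace ℝ E₁]
    [NormedAddCommGroup E₂] [InnerProductSpace ℝ E₂]
    [NormedAddCommGroup F] [InnerProductSpace ℝ F]
    (A : E₁ →L[ℝ] F) (B : E₂ →L[ℝ] F) (u : E₁) (v : E₂) :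
    |⟪A u, B v⟫| ≤ ‖A‖ * ‖B‖ * ‖u‖ * ‖v‖ :=
  calc |⟪A u, B v⟫| ≤ ‖A u‖ * ‖B v‖ := abs_real_inner_le_norm _ _
    _ ≤ (‖A‖ * ‖u‖) * (‖B‖ * ‖v‖) :=
      mul_le_mul (A.le_opNorm u) (B.le_opNorm v) (norm_nonneg _) (by positivity)
    _ = ‖A‖ * ‖B‖ * ‖u‖ * ‖v‖ := by ring

theorem ContinuousLinearEquiv.exists_pos_mul_sq_norm_le_inner_self {E F : Type*}
    [NormedAddCommGroup E] [InnerProductSpace ℝ E]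
    [NormedAddCommGroup F] [InnerProductSpace ℝ F] (G : E ≃L[ℝ] F) :
    ∃ α > 0, ∀ u : E, α * ‖u‖ ^ 2 ≤ ⟪G u, G u⟫ := by
  set c := ‖(G.symm : F →L[ℝ] E)‖ + 1
  have hc : 0 < c := by positivity
  refine ⟨(c ^ 2)⁻¹, by positivity, fun u => ?_⟩
  have hu : ‖u‖ ≤ c * ‖G u‖ :=
    calc ‖u‖ = ‖(G.symm : F →L[ℝ] E) (G u)‖ := by simp
      _ ≤ ‖(G.symm : F →L[ℝ] E)‖ * ‖G u‖ := ContinuousLinearMap.le_opNorm _ _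
      _ ≤ c * ‖G u‖ := by gcongr; linarith
  rw [real_inner_self_eq_norm_sq, inv_mul_le_iff₀ (by positivity), ← mul_pow]
  exact pow_le_pow_left₀ (norm_nonneg u) hu 2

theorem exists_forall_mul_inner_add_inner_map_eq {Z W : Type*}
    [NormedAddCommGroup Z] [InnerProductSpace ℝ Z] [CompleteSpace Z]
    [NormedAddCommGroup W] [InnerProductSpace ℝ W] [CompleteSpace W]
    (B : Z →L[ℝ] W) {ρ : ℝ} (hρ : 0 < ρ) (w : W) :
    ∃ z : Z, ∀ y : Z, ρ * ⟪z, y⟫ + ⟪B z, B y⟫ = ⟪w, B y⟫ := by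
  set T : Z →L[ℝ] Z := ρ • ContinuousLinearMap.id ℝ Z + ContinuousLinearMap.adjoint B ∘L B
  have hT : ∀ z y, ⟪T z, y⟫ = ρ * ⟪z, y⟫ + ⟪B z, B y⟫ := fun z y => by
    simp [T, inner_add_left, real_inner_smul_left, ContinuousLinearMap.adjoint_inner_left]
  have hcoercive : IsCoercive ((innerSL ℝ).comp T) :=
    ⟨ρ, hρ, fun z => by
      simp only [ContinuousLinearMap.comp_apply, innerSL_apply_apply, hT,
        mul_assoc, ← real_inner_self_eq_norm_mul_norm]
      linarith [real_inner_self_nonneg (x := B z)]⟩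
  set E := hcoercive.continuousLinearEquivOfBilin
  have hE : ∀ v, E v = T v := fun v =>
    ext_inner_right ℝ (hcoercive.continuousLinearEquivOfBilin_apply v)
  refine ⟨E.symm (ContinuousLinearMap.adjoint B w), fun y => ?_⟩
  rw [← hT, ← hE, E.apply_symm_apply, ContinuousLinearMap.adjoint_inner_left]

section SaddlePoint

variable {U L W Z : Type*}
  [NormedAddCommGroup U] [InnerProductSpace ℝ U]
  [NormedAddCommGroup L] [InnerProductSpace ℝ L]
  [NormedAddCommGroup W] [InnerProductSpace ℝ W]
  [NormedAddCommGroup Z] [InnerProductSpace ℝ Z]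
  (i : Z →L[ℝ] L) (G : U ≃L[ℝ] L) (F : U →L[ℝ] W) (fstar : L) (wstar : W) (ρ : ℝ)

/-- In the paper's notation: `d(u,v) + e(z,y) + a(v,p) + b(y,p) = ⟪F v, w*⟫` for all `(v, y)`
and `a(u,q) + b(z,q) = ⟪f*, G q⟫` for all `q`. -/
def IsSaddlePoint (w : U × Z × U) : Prop :=
  (∀ (v : U) (y : Z),
    ⟪F w.1, F v⟫ + ρ * ⟪w.2.1, y⟫ + ⟪G v, G w.2.2⟫ - ⟪i y, G w.2.2⟫ = ⟪F v, wstar⟫) ∧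
  (∀ q : U, ⟪G w.1, G q⟫ - ⟪i w.2.1, G q⟫ = ⟪fstar, G q⟫)

noncomputable def controlCost (u : U) (z : Z) : ℝ := 1 / 2 * ‖F u - wstar‖ ^ 2 + ρ / 2 * ‖z‖ ^ 2

variable {i G F fstar wstar ρ}

theorem isSaddlePoint_iff {u : U} {z : Z} {p : U} :
    IsSaddlePoint i G F fstar wstar ρ (u, z, p) ↔
      G u = fstar + i z ∧ (∀ v, ⟪G v, G p⟫ = ⟪F v, wstar - F u⟫) ∧
        ∀ y, ρ * ⟪z, y⟫ = ⟪i y, G p⟫ := by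
  constructor
  · rintro ⟨hvy, hq⟩
    refine ⟨ext_inner_right ℝ fun x => ?_, fun v => ?_, fun y => ?_⟩
    · have := hq (G.symm x)
      rw [G.apply_symm_apply] at this
      rw [inner_add_left]
      linarith
    · have := hvy v 0
      simp only [map_zero, inner_zero_left, inner_zero_right, mul_zero, add_zero,
        sub_zero] at this
      rw [inner_sub_right]
      linarith [real_inner_comm (F u) (F v)]
    · have := hvy 0 y
      simp only [map_zero, inner_zero_left, inner_zero_right, zero_add, add_zero] at this
      linarith
  · rintro ⟨hc, hv, hy⟩
    refine ⟨fun v y => ?_, fun q => ?_⟩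
    · rw [hv, ← hy, inner_sub_right, real_inner_comm (F v)]
      ring
    · rw [hc, inner_add_left]
      ring

theorem IsSaddlePoint.controlCost_eq {u : U} {z : Z} {p : U}
    (h : IsSaddlePoint i G F fstar wstar ρ (u, z, p)) {u' : U} {z' : Z}
    (hc' : G u' = fstar + i z') :
    controlCost F wstar ρ u' z' =
      controlCost F wstar ρ u z + (1 / 2 * ‖F (u' - u)‖ ^ 2 + ρ / 2 * ‖z' - z‖ ^ 2) := by
  obtain ⟨hc, hv, hy⟩ := isSaddlePoint_iff.1 h
  have hG : G (u' - u) = i (z' - z) := by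
    rw [map_sub, map_sub, hc', hc]
    abel
  have hvar : ⟪F u - wstar, F (u' - u)⟫ + ρ * ⟪z, z' - z⟫ = 0 := by
    rw [hy, ← hG, hv, ← neg_sub (F u) wstar, inner_neg_right, real_inner_comm]
    ring
  have hu' : F u' - wstar = (F u - wstar) + F (u' - u) := by
    rw [map_sub]
    abel
  have hz' : z' = z + (z' - z) := (add_sub_cancel z z').symm
  unfold controlCost
  rw [hu', norm_add_sq_real, hz', norm_add_sq_real, ← hz']
  linear_combination hvar

theorem IsSaddlePoint.controlCost_le (hρ : 0 ≤ ρ) {u : U} {z : Z} {p : U}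
    (h : IsSaddlePoint i G F fstar wstar ρ (u, z, p)) {u' : U} {z' : Z}
    (hc' : G u' = fstar + i z') :
    controlCost F wstar ρ u z ≤ controlCost F wstar ρ u' z' := by
  rw [h.controlCost_eq hc']
  have : 0 ≤ ρ / 2 * ‖z' - z‖ ^ 2 := by positivity
  have : 0 ≤ 1 / 2 * ‖F (u' - u)‖ ^ 2 := by positivity
  linarith

theorem IsSaddlePoint.eq_of_controlCost_eq (hρ : 0 < ρ) {u : U} {z : Z} {p : U}
    (h : IsSaddlePoint i G F fstar wstar ρ (u, z, p)) {u' : U} {z' : Z}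
    (hc' : G u' = fstar + i z')
    (heq : controlCost F wstar ρ u' z' = controlCost F wstar ρ u z) :
    u' = u ∧ z' = z := by
  rw [h.controlCost_eq hc'] at heq
  have hFu : 0 ≤ 1 / 2 * ‖F (u' - u)‖ ^ 2 := by positivity
  have hz : ρ / 2 * ‖z' - z‖ ^ 2 = 0 := by
    have : 0 ≤ ρ / 2 * ‖z' - z‖ ^ 2 := by positivity
    linarith
  have hzz : z' = z := by simpa [hρ.ne', sub_eq_zero] using hz
  refine ⟨G.injective ?_, hzz⟩
  rw [hc', hzz, (isSaddlePoint_iff.1 h).1]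

theorem IsSaddlePoint.unique (hρ : 0 < ρ) {w w' : U × Z × U}
    (h : IsSaddlePoint i G F fstar wstar ρ w) (h' : IsSaddlePoint i G F fstar wstar ρ w') :
    w = w' := by
  obtain ⟨u, z, p⟩ := w
  obtain ⟨u', z', p'⟩ := w'
  obtain ⟨hc, hv, -⟩ := isSaddlePoint_iff.1 h
  obtain ⟨hc', hv', -⟩ := isSaddlePoint_iff.1 h'
  obtain ⟨rfl, rfl⟩ := h.eq_of_controlCost_eq hρ hc'
    ((h'.controlCost_le hρ.le hc).antisymm (h.controlCost_le hρ.le hc'))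
  have hp : G p' = G p := ext_inner_left ℝ fun x => by
    rw [← G.apply_symm_apply x, hv, hv']
  rw [G.injective hp]

variable (i G F fstar wstar) in
theorem exists_isSaddlePoint [CompleteSpace U] [CompleteSpace L] [CompleteSpace W]
    [CompleteSpace Z] (hρ : 0 < ρ) : ∃ w, IsSaddlePoint i G F fstar wstar ρ w := by
  set S : L →L[ℝ] U := (G.symm : L →L[ℝ] U)
  obtain ⟨z, hz⟩ := exists_forall_mul_inner_add_inner_map_eq (F ∘L S ∘L i) hρ (wstar - F (S fstar))
  set u := S (fstar + i z)
  set q := ContinuousLinearMap.adjoint (F ∘L S) (wstar - F u)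
  refine ⟨(u, z, G.symm q), isSaddlePoint_iff.2 ⟨G.apply_symm_apply _, fun v => ?_, fun y => ?_⟩⟩
  · rw [G.apply_symm_apply, ContinuousLinearMap.adjoint_inner_right]
    simp [S]
  · have hFu : wstar - F u = (wstar - F (S fstar)) - F (S (i z)) := by
      simp only [u, map_add]
      abel
    rw [G.apply_symm_apply, ContinuousLinearMap.adjoint_inner_right, hFu, inner_sub_right]
    have := hz y
    simp only [ContinuousLinearMap.comp_apply] at this ⊢
    linarith [real_inner_comm (F (S (i y))) (wstar - F (S fstar)),
      real_inner_comm (F (S (i y))) (F (S (i z)))]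

end SaddlePoint

theorem stmt12_general
    {U L W Z : Type*}
    [NormedAddCommGroup U] [InnerProductSpace ℝ U] [CompleteSpace U]
    [NormedAddCommGroup L] [InnerProductSpace ℝ L] [CompleteSpace L]
    [NormedAddCommGroup W] [InnerProductSpace ℝ W] [CompleteSpace W]
    [NormedAddCommGroup Z] [InnerProductSpace ℝ Z] [CompleteSpace Z]
    (i : Z →L[ℝ] L)
    (G : U ≃L[ℝ] L) (F : U →L[ℝ] W) (fstar : L) (wstar : W)
    (ρ : ℝ) (hρ : 0 < ρ) :
    -- a bounded, symmetric, coercive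
    (∃ C : ℝ, ∀ u v : U, |⟪G u, G v⟫| ≤ C * ‖u‖ * ‖v‖) ∧
    (∀ u v : U, ⟪G u, G v⟫ = ⟪G v, G u⟫) ∧
    (∃ α > 0, ∀ u : U, α * ‖u‖ ^ 2 ≤ ⟪G u, G u⟫) ∧
    -- b bounded
    (∃ C : ℝ, ∀ (z : Z) (v : U), |-⟪i z, G v⟫| ≤ C * ‖z‖ * ‖v‖) ∧
    -- d bounded, symmetric, positive semi-definite
    (∃ C : ℝ, ∀ u v : U, |⟪F u, F v⟫| ≤ C * ‖u‖ * ‖v‖) ∧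
    (∀ u v : U, ⟪F u, F v⟫ = ⟪F v, F u⟫) ∧
    (∀ u : U, 0 ≤ ⟪F u, F u⟫) ∧
    -- e bounded, symmetric, coercive
    (∃ C : ℝ, ∀ z y : Z, |ρ * ⟪z, y⟫| ≤ C * ‖z‖ * ‖y‖) ∧
    (∀ z y : Z, ρ * ⟪z, y⟫ = ρ * ⟪y, z⟫) ∧
    (∀ z : Z, ρ * ‖z‖ ^ 2 ≤ ρ * ⟪z, z⟫) ∧
    -- unique solvability of the saddle-point problem
    (∃! w : U × Z × U,
      (∀ (v : U) (y : Z),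
        ⟪F w.1, F v⟫ + ρ * ⟪w.2.1, y⟫ + ⟪G v, G w.2.2⟫ - ⟪i y, G w.2.2⟫
          = ⟪F v, wstar⟫) ∧
      (∀ q : U, ⟪G w.1, G q⟫ - ⟪i w.2.1, G q⟫ = ⟪fstar, G q⟫)) ∧
    -- the first two components uniquely minimize J subject to Gu = f* + z
    (∀ w : U × Z × U,
      ((∀ (v : U) (y : Z),
        ⟪F w.1, F v⟫ + ρ * ⟪w.2.1, y⟫ + ⟪G v, G w.2.2⟫ - ⟪i y, G w.2.2⟫
          = ⟪F v, wstar⟫) ∧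
       (∀ q : U, ⟪G w.1, G q⟫ - ⟪i w.2.1, G q⟫ = ⟪fstar, G q⟫)) →
      (G w.1 = fstar + i w.2.1 ∧
        ∀ (u' : U) (z' : Z), G u' = fstar + i z' →
          ((1 / 2) * ‖F w.1 - wstar‖ ^ 2 + (ρ / 2) * ‖w.2.1‖ ^ 2
              ≤ (1 / 2) * ‖F u' - wstar‖ ^ 2 + (ρ / 2) * ‖z'‖ ^ 2) ∧
          ((1 / 2) * ‖F u' - wstar‖ ^ 2 + (ρ / 2) * ‖z'‖ ^ 2
              = (1 / 2) * ‖F w.1 - wstar‖ ^ 2 + (ρ / 2) * ‖w.2.1‖ ^ 2 →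
            u' = w.1 ∧ z' = w.2.1))) := by
  obtain ⟨w, hw⟩ := exists_isSaddlePoint i G F fstar wstar hρ
  refine ⟨⟨_, abs_inner_map_map_le (G : U →L[ℝ] L) (G : U →L[ℝ] L)⟩,
    fun u v => real_inner_comm _ _, G.exists_pos_mul_sq_norm_le_inner_self,
    ⟨_, fun z v => (abs_neg _).trans_le (abs_inner_map_map_le i (G : U →L[ℝ] L) z v)⟩,
    ⟨_, abs_inner_map_map_le F F⟩, fun u v => real_inner_comm _ _,
    fun u => real_inner_self_nonneg,
    ⟨|ρ|, fun z y => by rw [abs_mul, mul_assoc]; gcongr; exact abs_real_inner_le_norm z y⟩,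
    fun z y => by rw [real_inner_comm], fun z => by rw [real_inner_self_eq_norm_sq],
    ⟨w, hw, fun w' hw' => IsSaddlePoint.unique hρ hw' hw⟩, ?_⟩
  rintro ⟨u, z, p⟩ (h : IsSaddlePoint i G F fstar wstar ρ (u, z, p))
  exact ⟨(isSaddlePoint_iff.1 h).1, fun u' z' hc' =>
    ⟨h.controlCost_le hρ.le hc', h.eq_of_controlCost_eq hρ hc'⟩⟩

/-- for the optimal control problem constrained by the first-order
system least-squares operator G, the forms a(u,v)=⟨Gu,Gv⟩, b(z,v)=−⟨iz,Gv⟩,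
d(u,v)=⟨Fu,Fv⟩, e(z,y)=ρ⟨z,y⟩ have the required properties; the saddle-point problem
has a unique solution (u,z,p), and its first two components form the unique minimizer
of J(u,z)=½‖Fu−w*‖²+ (ρ/2)‖z‖² subject to Gu = f*+z. -/
theorem stmt12
    {U L W Z : Type*}
    [NormedAddCommGroup U] [InnerProductSpace ℝ U] [CompleteSpace U]
    [NormedAddCommGroup L] [InnerProductSpace ℝ L] [CompleteSpace L]
    [NormedAddCommGroup W] [InnerProductSpace ℝ W] [CompleteSpace W]
    [NormedAddCommGroup Z] [InnerProductSpace ℝ Z] [CompleteSpace Z]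
    (i : Z →L[ℝ] L) (hi : Function.Injective i)
    (G : U ≃L[ℝ] L) (F : U →L[ℝ] W) (fstar : L) (wstar : W)
    (ρ : ℝ) (hρ : 0 < ρ) :
    -- a bounded, symmetric, coercive
    (∃ C : ℝ, ∀ u v : U, |⟪G u, G v⟫| ≤ C * ‖u‖ * ‖v‖) ∧
    (∀ u v : U, ⟪G u, G v⟫ = ⟪G v, G u⟫) ∧
    (∃ α > 0, ∀ u : U, α * ‖u‖ ^ 2 ≤ ⟪G u, G u⟫) ∧
    -- b bounded
    (∃ C : ℝ, ∀ (z : Z) (v : U), |-⟪i z, G v⟫| ≤ C * ‖z‖ * ‖v‖) ∧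
    -- d bounded, symmetric, positive semi-definite
    (∃ C : ℝ, ∀ u v : U, |⟪F u, F v⟫| ≤ C * ‖u‖ * ‖v‖) ∧
    (∀ u v : U, ⟪F u, F v⟫ = ⟪F v, F u⟫) ∧
    (∀ u : U, 0 ≤ ⟪F u, F u⟫) ∧
    -- e bounded, symmetric, coercive
    (∃ C : ℝ, ∀ z y : Z, |ρ * ⟪z, y⟫| ≤ C * ‖z‖ * ‖y‖) ∧
    (∀ z y : Z, ρ * ⟪z, y⟫ = ρ * ⟪y, z⟫) ∧
    (∀ z : Z, ρ * ‖z‖ ^ 2 ≤ ρ * ⟪z, z⟫) ∧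
    -- unique solvability of the saddle-point problem
    (∃! w : U × Z × U,
      (∀ (v : U) (y : Z),
        ⟪F w.1, F v⟫ + ρ * ⟪w.2.1, y⟫ + ⟪G v, G w.2.2⟫ - ⟪i y, G w.2.2⟫
          = ⟪F v, wstar⟫) ∧
      (∀ q : U, ⟪G w.1, G q⟫ - ⟪i w.2.1, G q⟫ = ⟪fstar, G q⟫)) ∧
    -- the first two components uniquely minimize J subject to Gu = f* + z
    (∀ w : U × Z × U,
      ((∀ (v : U) (y : Z),
        ⟪F w.1, F v⟫ + ρ * ⟪w.2.1, y⟫ + ⟪G v, G w.2.2⟫ - ⟪i y, G w.2.2⟫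
          = ⟪F v, wstar⟫) ∧
       (∀ q : U, ⟪G w.1, G q⟫ - ⟪i w.2.1, G q⟫ = ⟪fstar, G q⟫)) →
      (G w.1 = fstar + i w.2.1 ∧
        ∀ (u' : U) (z' : Z), G u' = fstar + i z' →
          ((1 / 2) * ‖F w.1 - wstar‖ ^ 2 + (ρ / 2) * ‖w.2.1‖ ^ 2
              ≤ (1 / 2) * ‖F u' - wstar‖ ^ 2 + (ρ / 2) * ‖z'‖ ^ 2) ∧
          ((1 / 2) * ‖F u' - wstar‖ ^ 2 + (ρ / 2) * ‖z'‖ ^ 2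
              = (1 / 2) * ‖F w.1 - wstar‖ ^ 2 + (ρ / 2) * ‖w.2.1‖ ^ 2 →
            u' = w.1 ∧ z' = w.2.1))) :=
  stmt12_general i G F fstar wstar ρ hρ
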